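/- Let K be a compact, perfectly normal topological space and X a real Banach space. A function f ∈ C(K,X) with ‖f‖ = 1 is a (ρ₊)-left symmetric point of C(K,X) if and only if both of the following hold: (i) there exists k₀ ∈ K such that ‖f(k₀)‖ = 1 and f(k) = 0 for all k ∈ K with k ≠ k₀, and (ii) f(k₀) is a (ρ₊)-left symmetric point of X. -/

import Mathlib

open Filter Topology Set Metric NormedSpace

noncomputable section

/-- Birkhoff–James orthogonality: `x ⊥_B y` iff `‖x + t • y‖ ≥ ‖x‖` for all real `t`. -/
def BJOrth {E : Type*} [NormedAddCommGroup E] [NormedSpace ℝ E] (x y : E) : Prop :=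
  ∀ t : ℝ, ‖x‖ ≤ ‖x + t • y‖

/-- The norm derivative `ρ'₊(x,y) = ‖x‖ · lim_{t→0⁺} (‖x+ty‖-‖x‖)/t`. -/
def rhoPlus {E : Type*} [NormedAddCommGroup E] [NormedSpace ℝ E] (x y : E) : ℝ :=
  ‖x‖ * limUnder (𝓝[>] (0 : ℝ)) (fun t => (‖x + t • y‖ - ‖x‖) / t)

/-- The norm derivative `ρ'₋(x,y) = ‖x‖ · lim_{t→0⁻} (‖x+ty‖-‖x‖)/t`. -/
def rhoMinus {E : Type*} [NormedAddCommGroup E] [NormedSpace ℝ E] (x y : E) : ℝ :=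
  ‖x‖ * limUnder (𝓝[<] (0 : ℝ)) (fun t => (‖x + t • y‖ - ‖x‖) / t)

/-- The norm derivative `ρ'(x,y) = (ρ'₊(x,y) + ρ'₋(x,y))/2`. -/
def rhoDer {E : Type*} [NormedAddCommGroup E] [NormedSpace ℝ E] (x y : E) : ℝ :=
  (rhoPlus x y + rhoMinus x y) / 2

/-- `x` is an exposed point of the closed unit ball of `E`: there is a norm-one functional `f`
with `f x = 1` and `f u < 1` for every `u` in the ball with `u ≠ x`. -/
def ExposedPt {E : Type*} [NormedAddCommGroup E] [NormedSpace ℝ E] (x : E) : Prop :=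
  ‖x‖ ≤ 1 ∧ ∃ f : E →L[ℝ] ℝ, ‖f‖ = 1 ∧ f x = 1 ∧ ∀ u : E, ‖u‖ ≤ 1 → u ≠ x → f u < 1

/-!
On a compact space the one-sided norm derivative of the sup norm is a maximum over peak points:
`ρ'₊(f, g) = max {ρ'₊(f k, g k) | ‖f k‖ = ‖f‖}`. The difference quotients of the convex map
`t ↦ ‖f + t • g‖` decrease as `t ↓ 0`, and a cluster point of points where `f + t • g` peaks is a
peak point of `f` at which the maximum is attained.

Together with `ρ'₊(a • x, b • x) = a * b * ‖x‖ ^ 2` this settles the theorem. If `f` is left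
symmetric, peaks at `k₀` and `f k ≠ 0` for some `k ≠ k₀`, then for an Urysohn function `φ` with
`φ k₀ = 0`, `φ k = 1`, the function `g = -φ • f` has `ρ'₊(f, g) = 0` but `ρ'₊(g, f) < 0`. So `f`
is supported at `k₀`, and testing against `g = ψ • y`, where `ψ⁻¹' {1} = {k₀}` exists by perfect
normality, transfers left symmetry to `f k₀`. The converse is read off the maximum formula.
-/

section

variable {E : Type*} [NormedAddCommGroup E] [NormedSpace ℝ E]

theorem convexOn_norm_add_smul (x y : E) : ConvexOn ℝ univ (fun t : ℝ => ‖x + t • y‖) := by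
  simpa [Function.comp_def, AffineMap.lineMap_apply, add_comm] using
    (convexOn_norm (convex_univ (E := E))).comp_affineMap (AffineMap.lineMap x (x + y))

def normRightDeriv (x y : E) : ℝ := derivWithin (fun t : ℝ => ‖x + t • y‖) (Ioi 0) 0

theorem hasDerivWithinAt_normRightDeriv (x y : E) :
    HasDerivWithinAt (fun t : ℝ => ‖x + t • y‖) (normRightDeriv x y) (Ioi 0) 0 :=
  ((convexOn_norm_add_smul x y).differentiableWithinAt_Ioi_of_mem_interior
    (by simp)).hasDerivWithinAt

theorem tendsto_normRightDeriv (x y : E) :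
    Tendsto (fun t : ℝ => (‖x + t • y‖ - ‖x‖) / t) (𝓝[>] 0) (𝓝 (normRightDeriv x y)) := by
  refine ((hasDerivWithinAt_iff_tendsto_slope' self_notMem_Ioi).1
    (hasDerivWithinAt_normRightDeriv x y)).congr fun t => ?_
  simp [slope_def_field]

theorem rhoPlus_eq_norm_mul_normRightDeriv (x y : E) :
    rhoPlus x y = ‖x‖ * normRightDeriv x y := by
  rw [rhoPlus, (tendsto_normRightDeriv x y).limUnder_eq]

theorem normRightDeriv_le_div {x y : E} {t : ℝ} (ht : 0 < t) :
    normRightDeriv x y ≤ (‖x + t • y‖ - ‖x‖) / t := by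
  simpa [normRightDeriv, slope_def_field] using
    (convexOn_norm_add_smul x y).rightDeriv_le_slope_of_mem_interior (by simp) (mem_univ t) ht

theorem le_normRightDeriv_of_forall {x y : E} {c : ℝ}
    (h : ∀ t > 0, c ≤ (‖x + t • y‖ - ‖x‖) / t) : c ≤ normRightDeriv x y :=
  ge_of_tendsto (tendsto_normRightDeriv x y) (eventually_nhdsWithin_of_forall h)

theorem div_norm_add_smul_sub_norm_mono {x y : E} {s t : ℝ} (hs : 0 < s) (hst : s ≤ t) :
    (‖x + s • y‖ - ‖x‖) / s ≤ (‖x + t • y‖ - ‖x‖) / t := by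
  simpa using (convexOn_norm_add_smul x y).secant_mono (mem_univ 0) (mem_univ s) (mem_univ t)
    hs.ne' (hs.trans_le hst).ne' hst

theorem rhoPlus_smul_smul (a b : ℝ) (x : E) : rhoPlus (a • x) (b • x) = a * b * ‖x‖ ^ 2 := by
  rcases eq_or_ne a 0 with rfl | ha
  · simp [rhoPlus]
  have hline : (fun t : ℝ => ‖a • x + t • b • x‖) = fun t => |a + t * b| * ‖x‖ := by
    funext t
    rw [smul_smul, ← add_smul, norm_smul, Real.norm_eq_abs]
  have hderiv : HasDerivAt (fun t : ℝ => |a + t * b| * ‖x‖) (SignType.sign a * b * ‖x‖) 0 := by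
    have hlin : HasDerivAt (fun t : ℝ => a + t * b) b 0 := by
      simpa using ((hasDerivAt_id (0:ℝ)).mul_const b).const_add a
    simpa using ((hasDerivAt_abs (by simpa using ha)).comp (0:ℝ) hlin).mul_const ‖x‖
  rw [rhoPlus_eq_norm_mul_normRightDeriv, normRightDeriv, hline,
    hderiv.hasDerivWithinAt.derivWithin (uniqueDiffWithinAt_Ioi 0), norm_smul, Real.norm_eq_abs]
  calc |a| * ‖x‖ * (SignType.sign a * b * ‖x‖) = (|a| * SignType.sign a) * b * ‖x‖ ^ 2 := by ring
    _ = a * b * ‖x‖ ^ 2 := by rw [abs_mul_sign]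

theorem rhoPlus_smul_right_self (x : E) (c : ℝ) : rhoPlus x (c • x) = c * ‖x‖ ^ 2 := by
  simpa using rhoPlus_smul_smul 1 c x

theorem rhoPlus_smul_left_self (x : E) (c : ℝ) : rhoPlus (c • x) x = c * ‖x‖ ^ 2 := by
  simpa using rhoPlus_smul_smul c 1 x

theorem rhoPlus_zero_left (y : E) : rhoPlus 0 y = 0 := by
  simp [rhoPlus]

theorem rhoPlus_zero_right (x : E) : rhoPlus x 0 = 0 := by
  simpa using rhoPlus_smul_right_self x 0

def IsRhoPlusLeftSymmetric (x : E) : Prop :=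
  ∀ y, rhoPlus x y = 0 → rhoPlus y x = 0

end

namespace ContinuousMap

variable {K X : Type*} [TopologicalSpace K] [CompactSpace K] [NormedAddCommGroup X]

theorem exists_norm_apply_eq_norm [Nonempty K] (f : C(K, X)) : ∃ k, ‖f k‖ = ‖f‖ := by
  obtain ⟨k, -, hk⟩ := isCompact_univ.exists_isMaxOn univ_nonempty f.continuous.norm.continuousOn
  exact ⟨k, le_antisymm (f.norm_coe_le_norm k) ((f.norm_le (norm_nonneg _)).2 fun _ => hk trivial)⟩

theorem eq_of_norm_apply_eq_norm {f : C(K, X)} {k₀ k : K} (hfk₀ : f k₀ ≠ 0)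
    (hvanish : ∀ k ≠ k₀, f k = 0) (hk : ‖f k‖ = ‖f‖) : k = k₀ := by
  by_contra hne
  rw [hvanish k hne, norm_zero] at hk
  exact hfk₀ (norm_le_zero_iff.1 (hk ▸ f.norm_coe_le_norm k₀))

variable [NormedSpace ℝ X]

theorem normRightDeriv_apply_le (f g : C(K, X)) {k : K} (hk : ‖f k‖ = ‖f‖) :
    normRightDeriv (f k) (g k) ≤ normRightDeriv f g := by
  refine le_normRightDeriv_of_forall fun t ht => (normRightDeriv_le_div ht).trans ?_
  rw [hk]
  gcongr
  exact (f + t • g).norm_coe_le_norm k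

theorem exists_normRightDeriv_apply_eq [Nonempty K] (f g : C(K, X)) :
    ∃ k, ‖f k‖ = ‖f‖ ∧ normRightDeriv (f k) (g k) = normRightDeriv f g := by
  set c := normRightDeriv f g
  have hpeak : ∀ t > 0, ∃ k, ‖f‖ + t * c ≤ ‖f k + t • g k‖ := by
    intro t ht
    obtain ⟨k, hk⟩ := (f + t • g).exists_norm_apply_eq_norm
    have hc := normRightDeriv_le_div (x := f) (y := g) ht
    rw [le_div_iff₀ ht] at hc
    exact ⟨k, by simp only [coe_add, coe_smul, Pi.add_apply, Pi.smul_apply] at hk; linarith⟩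
  choose! u hu using hpeak
  obtain ⟨k, -, hk⟩ := isCompact_univ.exists_mapClusterPt (f := 𝓝[>] (0:ℝ)) (u := u) (by simp)
  have hnorm : ‖f k‖ = ‖f‖ := by
    refine le_antisymm (f.norm_coe_le_norm k) (le_of_forall_sub_le fun η hη => ?_)
    refine (isClosed_le continuous_const f.continuous.norm).mem_of_mapClusterPt hk ?_
    have hsmall : ∀ᶠ t in 𝓝[>] (0:ℝ), t * (‖g‖ - c) < η :=
      (((continuous_id.mul continuous_const).tendsto' 0 0 (by simp)).mono_left
        nhdsWithin_le_nhds).eventually_lt_const hη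
    filter_upwards [hsmall, self_mem_nhdsWithin] with t hsmall (ht : 0 < t)
    have htriangle := norm_add_le (f (u t)) (t • g (u t))
    rw [norm_smul, Real.norm_of_nonneg ht.le] at htriangle
    nlinarith [hu t ht, g.norm_coe_le_norm (u t)]
  refine ⟨k, hnorm, le_antisymm (normRightDeriv_apply_le f g hnorm) ?_⟩
  refine le_normRightDeriv_of_forall fun s hs => ?_
  have hcont : Continuous fun k => (‖f k + s • g k‖ - ‖f k‖) / s := by fun_prop
  refine (isClosed_le continuous_const hcont).mem_of_mapClusterPt hk ?_
  filter_upwards [Ioo_mem_nhdsGT hs] with t ⟨ht, hts⟩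
  calc c ≤ (‖f (u t) + t • g (u t)‖ - ‖f (u t)‖) / t := by
        rw [le_div_iff₀ ht]
        linarith [hu t ht, f.norm_coe_le_norm (u t)]
    _ ≤ (‖f (u t) + s • g (u t)‖ - ‖f (u t)‖) / s := div_norm_add_smul_sub_norm_mono ht hts.le

theorem rhoPlus_apply_le (f g : C(K, X)) {k : K} (hk : ‖f k‖ = ‖f‖) :
    rhoPlus (f k) (g k) ≤ rhoPlus f g := by
  rw [rhoPlus_eq_norm_mul_normRightDeriv, rhoPlus_eq_norm_mul_normRightDeriv, hk]
  exact mul_le_mul_of_nonneg_left (normRightDeriv_apply_le f g hk) (norm_nonneg f)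

theorem exists_rhoPlus_apply_eq [Nonempty K] (f g : C(K, X)) :
    ∃ k, ‖f k‖ = ‖f‖ ∧ rhoPlus (f k) (g k) = rhoPlus f g := by
  obtain ⟨k, hk, hder⟩ := exists_normRightDeriv_apply_eq f g
  refine ⟨k, hk, ?_⟩
  rw [rhoPlus_eq_norm_mul_normRightDeriv, rhoPlus_eq_norm_mul_normRightDeriv, hk, hder]

end ContinuousMap

namespace IsRhoPlusLeftSymmetric

open ContinuousMap

variable {K X : Type*} [TopologicalSpace K] [CompactSpace K] [NormedAddCommGroup X]
  [NormedSpace ℝ X] {f : C(K, X)} {k₀ : K}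

theorem eq_zero_of_ne [NormalSpace K] [T1Space K] (hf : IsRhoPlusLeftSymmetric f)
    (hk₀ : ‖f k₀‖ = ‖f‖) {k : K} (hk : k ≠ k₀) : f k = 0 := by
  have : Nonempty K := ⟨k₀⟩
  by_contra hfk
  obtain ⟨φ, hφ₀, hφ₁, hφ⟩ := exists_continuous_zero_one_of_isClosed
    (isClosed_singleton (x := k₀)) (isClosed_singleton (x := k)) (disjoint_singleton.2 hk.symm)
  let g : C(K, X) := ⟨fun k => -φ k • f k, by fun_prop⟩
  have hg : ∀ k, g k = -φ k • f k := fun _ => rfl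
  have hfg : rhoPlus f g = 0 := by
    obtain ⟨k', -, hk'⟩ := exists_rhoPlus_apply_eq f g
    refine le_antisymm ?_ ?_
    · rw [← hk', hg, rhoPlus_smul_right_self]
      nlinarith [(hφ k').1, sq_nonneg ‖f k'‖]
    · calc (0 : ℝ) = rhoPlus (f k₀) (g k₀) := by rw [hg, hφ₀ rfl]; simp [rhoPlus_zero_right]
        _ ≤ rhoPlus f g := rhoPlus_apply_le f g hk₀
  obtain ⟨k', hk', hgf⟩ := exists_rhoPlus_apply_eq g f
  have hnorm : ∀ k, ‖g k‖ = φ k * ‖f k‖ := fun k => by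
    rw [hg, norm_smul, norm_neg, Real.norm_of_nonneg (hφ k).1]
  have hpos : 0 < φ k' * ‖f k'‖ := by
    rw [← hnorm, hk']
    exact (norm_pos_iff.2 hfk).trans_le (by simpa [hnorm, hφ₁ rfl] using g.norm_coe_le_norm k)
  have hneg : rhoPlus (g k') (f k') < 0 := by
    rw [hg, rhoPlus_smul_left_self]
    nlinarith [(hφ k').1, norm_nonneg (f k')]
  exact hneg.ne (hgf.trans (hf g hfg))

theorem apply [T2Space K] [PerfectlyNormalSpace K] (hf : IsRhoPlusLeftSymmetric f)
    (hfk₀ : f k₀ ≠ 0) (hvanish : ∀ k ≠ k₀, f k = 0) : IsRhoPlusLeftSymmetric (f k₀) := by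
  have : Nonempty K := ⟨k₀⟩
  intro y hy
  rcases eq_or_ne y 0 with rfl | hy0
  · exact rhoPlus_zero_left _
  obtain ⟨ψ, hψ, -, -, hψ01⟩ := exists_continuous_one_zero_of_isCompact_of_isGδ
    isCompact_singleton (PerfectlyNormalSpace.closed_gdelta isClosed_singleton) isClosed_empty
    (disjoint_empty {k₀})
  have hψ₁ : ∀ {k}, ψ k = 1 ↔ k = k₀ := fun {k} => by
    rw [← mem_singleton_iff (a := k), hψ]; rfl
  let g : C(K, X) := ⟨fun k => ψ k • y, by fun_prop⟩
  have hgk₀ : g k₀ = y := by simp [g, hψ₁.2 rfl]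
  have hfg : rhoPlus f g = 0 := by
    obtain ⟨k, hk, hfg⟩ := exists_rhoPlus_apply_eq f g
    rw [← hfg, eq_of_norm_apply_eq_norm hfk₀ hvanish hk, hgk₀, hy]
  obtain ⟨k, hk, hgf⟩ := exists_rhoPlus_apply_eq g f
  have hψk : ψ k = 1 := by
    have hle : ‖y‖ ≤ ψ k * ‖y‖ :=
      calc ‖y‖ = ‖g k₀‖ := by rw [hgk₀]
        _ ≤ ‖g k‖ := hk ▸ g.norm_coe_le_norm k₀
        _ = ψ k * ‖y‖ := by simp [g, norm_smul, Real.norm_of_nonneg (hψ01 k).1]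
    nlinarith [(hψ01 k).2, norm_pos_iff.2 hy0]
  rw [← hgk₀, ← hψ₁.1 hψk, hgf]
  exact hf g hfg

theorem of_apply (hfk₀ : f k₀ ≠ 0) (hvanish : ∀ k ≠ k₀, f k = 0)
    (h : IsRhoPlusLeftSymmetric (f k₀)) : IsRhoPlusLeftSymmetric f := by
  have : Nonempty K := ⟨k₀⟩
  intro g hfg
  obtain ⟨k, hk, hfgk⟩ := exists_rhoPlus_apply_eq f g
  rw [eq_of_norm_apply_eq_norm hfk₀ hvanish hk] at hfgk
  obtain ⟨k', -, hgf⟩ := exists_rhoPlus_apply_eq g f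
  rw [← hgf]
  rcases eq_or_ne k' k₀ with rfl | hk'
  · exact h _ (hfgk.trans hfg)
  · rw [hvanish k' hk', rhoPlus_zero_right]

end IsRhoPlusLeftSymmetric

theorem stmt10_general {K X : Type*} [TopologicalSpace K] [CompactSpace K] [T2Space K]
    [PerfectlyNormalSpace K]
    [NormedAddCommGroup X] [NormedSpace ℝ X]
    (f : C(K, X)) (hf : ‖f‖ = 1) :
    (∀ g : C(K, X), rhoPlus f g = 0 → rhoPlus g f = 0) ↔
      (∃ k₀ : K, ‖f k₀‖ = 1 ∧ (∀ k : K, k ≠ k₀ → f k = 0) ∧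
        (∀ y : X, rhoPlus (f k₀) y = 0 → rhoPlus y (f k₀) = 0)) := by
  change IsRhoPlusLeftSymmetric f ↔
    ∃ k₀, ‖f k₀‖ = 1 ∧ (∀ k, k ≠ k₀ → f k = 0) ∧ IsRhoPlusLeftSymmetric (f k₀)
  have hne : ∀ {k₀}, ‖f k₀‖ = 1 → f k₀ ≠ 0 := fun hk₀ h0 => by simp [h0] at hk₀
  constructor
  · intro hsymm
    have : Nonempty K := by
      by_contra hK
      rw [not_nonempty_iff] at hK
      simp [ContinuousMap.norm_eq_iSup_norm] at hf
    obtain ⟨k₀, hk₀⟩ := f.exists_norm_apply_eq_norm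
    have hvanish : ∀ k ≠ k₀, f k = 0 := fun k hk => hsymm.eq_zero_of_ne hk₀ hk
    rw [hf] at hk₀
    exact ⟨k₀, hk₀, hvanish, hsymm.apply (hne hk₀) hvanish⟩
  · rintro ⟨k₀, hk₀, hvanish, hsymm⟩
    exact hsymm.of_apply (hne hk₀) hvanish

theorem stmt10 {K X : Type*} [TopologicalSpace K] [CompactSpace K] [T2Space K]
    [PerfectlyNormalSpace K]
    [NormedAddCommGroup X] [NormedSpace ℝ X] [CompleteSpace X]
    (f : C(K, X)) (hf : ‖f‖ = 1) :
    (∀ g : C(K, X), rhoPlus f g = 0 → rhoPlus g f = 0) ↔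
      (∃ k₀ : K, ‖f k₀‖ = 1 ∧ (∀ k : K, k ≠ k₀ → f k = 0) ∧
        (∀ y : X, rhoPlus (f k₀) y = 0 → rhoPlus y (f k₀) = 0)) :=
  stmt10_general f hf
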